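/- If a history H is strong update consistent for the set UQ-ADT via visibility vis and total order ≤, then the relation IW defined as the smallest relation containing (a) vis, (b) all pairs (e, e') where e, e' are updates on the same element with e ≤ e', and (c) pairs (e, q) where q is a query and there is an update e'' with e IW e'' and e'' IW q, is acyclic (being contained in the strict total order induced by ≤). -/

import Mathlib

/-- An update-query abstract data type. -/
structure UQADT (U Qi Qo S : Type*) where
  s0 : S
  T : S → U → S
  G : S → Qi → Qo

/-- A distributed history: events labelled by updates or queries, with a program order. -/
structure Hist (U Qi Qo E : Type*) where
  lab : E → U ⊕ (Qi × Qo)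
  po : E → E → Prop

variable {U Qi Qo S E : Type*}

def Hist.upd (h : Hist U Qi Qo E) : Set E := {e | ∃ u, h.lab e = Sum.inl u}
def Hist.qry (h : Hist U Qi Qo E) : Set E := {e | ∃ q, h.lab e = Sum.inr q}

/-- `w` is an enumeration (an initial segment of `ℕ`, possibly finite) of the
set `F` of events, compatible with the relation `r`. -/
def IsLinz (r : E → E → Prop) (F : Set E) (w : ℕ → Option E) : Prop :=
  (∀ i j a, w i = some a → w j = some a → i = j) ∧
  (∀ a ∈ F, ∃ i, w i = some a) ∧
  (∀ i a, w i = some a → a ∈ F) ∧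
  (∀ i j a b, i < j → w i = some a → w j = some b → ¬ r b a) ∧
  (∀ i j, i ≤ j → w j ≠ none → w i ≠ none)

/-- The sequential word read off along `w` is recognized by `O`. -/
def Recog (O : UQADT U Qi Qo S) (h : Hist U Qi Qo E) (w : ℕ → Option E) : Prop :=
  ∃ st : ℕ → S, st 0 = O.s0 ∧ ∀ i,
    match w i with
    | none => st (i+1) = st i
    | some e =>
      match h.lab e with
      | Sum.inl u => st (i+1) = O.T (st i) u
      | Sum.inr (qi, qo) => st (i+1) = st i ∧ O.G (st i) qi = qo

/-- Eventual consistency. -/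
def EC (O : UQADT U Qi Qo S) (h : Hist U Qi Qo E) : Prop :=
  h.upd.Infinite ∨ ∃ s : S,
    {e : E | ∃ qi qo, h.lab e = Sum.inr (qi, qo) ∧ O.G s qi ≠ qo}.Finite

/-- Update consistency. -/
def UC (O : UQADT U Qi Qo S) (h : Hist U Qi Qo E) : Prop :=
  h.upd.Infinite ∨ ∃ Q' : Set E, Q' ⊆ h.qry ∧ Q'.Finite ∧
    ∃ w, IsLinz h.po Q'ᶜ w ∧ Recog O h w

/-- A reflexive relation is acyclic if its strict part has no cycles. -/
def Acyclic (r : E → E → Prop) : Prop :=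
  ∀ e, ¬ Relation.TransGen (fun a b => r a b ∧ a ≠ b) e e

/-- Strong update consistency. -/
def SUC (O : UQADT U Qi Qo S) (h : Hist U Qi Qo E) : Prop :=
  ∃ vis le : E → E → Prop,
    (∀ e, vis e e) ∧ Acyclic vis ∧
    (∀ e e', h.po e e' → vis e e') ∧
    (∀ u ∈ h.upd, {e | ¬ vis u e}.Finite) ∧
    (∀ e e' e'', vis e e' → h.po e' e'' → vis e e'') ∧
    IsLinearOrder E le ∧ (∀ e e', vis e e' → le e e') ∧
    (∀ q ∈ h.qry, ∃ w,
      IsLinz (fun a b => le a b ∧ a ≠ b) ({u | u ∈ h.upd ∧ vis u q} ∪ {q}) w ∧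
      Recog O h w)

/-- Strong eventual consistency. -/
def SEC (O : UQADT U Qi Qo S) (h : Hist U Qi Qo E) : Prop :=
  ∃ vis : E → E → Prop,
    (∀ e, vis e e) ∧ Acyclic vis ∧
    (∀ e e', h.po e e' → vis e e') ∧
    (∀ u ∈ h.upd, {e | ¬ vis u e}.Finite) ∧
    (∀ e e' e'', vis e e' → h.po e' e'' → vis e e'') ∧
    ∀ V ⊆ h.upd, ∃ s : S, ∀ e qi qo, h.lab e = Sum.inr (qi, qo) →
      {u | u ∈ h.upd ∧ vis u e} = V → O.G s qi = qo

/-- Update operations on the shared set: insertion and deletion. -/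
inductive SOp where
  | I : ℕ → SOp
  | D : ℕ → SOp
deriving DecidableEq

/-- Transition function of the set UQ-ADT. -/
def applyU (s : Finset ℕ) : SOp → Finset ℕ
  | .I v => insert v s
  | .D v => s.erase v

/-- The set UQ-ADT over support ℕ. -/
def setO : UQADT SOp Unit (Finset ℕ) (Finset ℕ) where
  s0 := ∅
  T := applyU
  G := fun s _ => s

/-- The Insert-wins relation IW: smallest relation containing vis, pairs of
updates on the same element ordered by ≤, and closed by transitivity through
an update towards a query. -/
inductive IW (h : Hist SOp Unit (Finset ℕ) E) (vis le : E → E → Prop) :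
    E → E → Prop
  | ofVis {e e' : E} : vis e e' → IW h vis le e e'
  | sameElt {e e' : E} (v : ℕ) :
      (h.lab e = Sum.inl (SOp.I v) ∨ h.lab e = Sum.inl (SOp.D v)) →
      (h.lab e' = Sum.inl (SOp.I v) ∨ h.lab e' = Sum.inl (SOp.D v)) →
      le e e' → IW h vis le e e'
  | queryTrans {e e'' q : E} : q ∈ h.qry → e'' ∈ h.upd →
      IW h vis le e e'' → IW h vis le e'' q → IW h vis le e q

theorem IW.le {h : Hist SOp Unit (Finset ℕ) E} {vis le : E → E → Prop} [IsTrans E le]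
    (hvis : ∀ e e', vis e e' → le e e') {e e' : E} (hiw : IW h vis le e e') : le e e' := by
  induction hiw with
  | ofVis hv => exact hvis _ _ hv
  | sameElt _ _ _ hle => exact hle
  | queryTrans _ _ _ _ ih₁ ih₂ => exact _root_.trans ih₁ ih₂

theorem acyclic_of_le {r le : E → E → Prop} [IsTrans E le] [Std.Antisymm le]
    (hr : ∀ a b, r a b → le a b) : Acyclic r := by
  intro e he
  cases he with
  | single hee => exact hee.2 rfl
  | @tail b _ heb hbe =>
    have hle : le e b := by
      rw [← Relation.transGen_eq_self (r := le)]
      exact Relation.TransGen.mono (fun a b hab => hr a b hab.1) _ _ heb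
    exact hbe.2 (antisymm (hr _ _ hbe.1) hle)

theorem stmt15_general {E : Type*} (h : Hist SOp Unit (Finset ℕ) E)
    (vis le : E → E → Prop)
    (hlin : IsLinearOrder E le) (hvisle : ∀ e e', vis e e' → le e e') :
    (∀ e e', IW h vis le e e' → le e e') ∧ Acyclic (IW h vis le) := by
  have hIW : ∀ e e', IW h vis le e e' → le e e' := fun _ _ => IW.le hvisle
  exact ⟨hIW, acyclic_of_le hIW⟩

/-- if H is strong update consistent for the set via vis and ≤,
then IW is contained in ≤, hence acyclic. -/
theorem stmt15 {E : Type*} (h : Hist SOp Unit (Finset ℕ) E)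
    (vis le : E → E → Prop)
    (hrefl : ∀ e, vis e e) (hacyc : Acyclic vis)
    (hcont : ∀ e e', h.po e e' → vis e e')
    (hdeliv : ∀ u ∈ h.upd, {e | ¬ vis u e}.Finite)
    (hgrow : ∀ e e' e'', vis e e' → h.po e' e'' → vis e e'')
    (hlin : IsLinearOrder E le) (hvisle : ∀ e e', vis e e' → le e e')
    (hconv : ∀ q ∈ h.qry, ∃ w,
      IsLinz (fun a b => le a b ∧ a ≠ b) ({u | u ∈ h.upd ∧ vis u q} ∪ {q}) w ∧
      Recog setO h w) :
    (∀ e e', IW h vis le e e' → le e e') ∧ Acyclic (IW h vis le) :=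
  stmt15_general h vis le hlin hvisle
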